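/- Let L : M_d → M_d be a linear map such that e^{tL} is a unital completely positive map on M_d for every t ≥ 0. Then: (i) every eigenvalue λ of L satisfies Re(λ) ≤ 0; (ii) if λ is an eigenvalue of L with Re(λ) = 0, then the generalized eigenspace of λ equals its eigenspace, i.e. ker((L − λ·id)²) = ker(L − λ·id); (iii) if λ is an eigenvalue of L with Re(λ) < 0, then e^{tL}(X) → 0 as t → ∞ for every X in the generalized eigenspace of L corresponding to λ. -/

import Mathlib

noncomputable section
open scoped Kronecker
open Filter Topology Matrix

/-- `M_d`, the algebra of `d × d` complex matrices. -/
abbrev Md (d : ℕ) := Matrix (Fin d) (Fin d) ℂ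

/-- `Ad_U : X ↦ U* X U` for a unitary `U`. -/
def adU {d : ℕ} (U : Matrix.unitaryGroup (Fin d) ℂ) : Md d →ₗ[ℂ] Md d where
  toFun X := (U : Md d)ᴴ * X * (U : Md d)
  map_add' X Y := by simp [Matrix.mul_add, Matrix.add_mul]
  map_smul' c X := by simp [Matrix.mul_smul, Matrix.smul_mul]

/-- A linear map is completely positive if it has a Kraus decomposition. -/
def IsCP {d : ℕ} (Φ : Md d →ₗ[ℂ] Md d) : Prop :=
  ∃ (n : ℕ) (V : Fin n → Md d), ∀ X, Φ X = ∑ j, (V j)ᴴ * X * (V j)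

def IsUnital {d : ℕ} (Φ : Md d →ₗ[ℂ] Md d) : Prop := Φ 1 = 1

def IsTracePreserving {d : ℕ} (Φ : Md d →ₗ[ℂ] Md d) : Prop :=
  ∀ X, (Φ X).trace = X.trace

def IsHermitianPreserving {d : ℕ} (Φ : Md d →ₗ[ℂ] Md d) : Prop :=
  ∀ X, Φ Xᴴ = (Φ X)ᴴ

/-- A unital quantum channel: CP, unital and trace-preserving. -/
def IsUnitalChannel {d : ℕ} (Φ : Md d →ₗ[ℂ] Md d) : Prop :=
  IsCP Φ ∧ IsUnital Φ ∧ IsTracePreserving Φ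

/-- A mixed unitary channel: a convex combination of unitary conjugations. -/
def IsMixedUnitary {d : ℕ} (Φ : Md d →ₗ[ℂ] Md d) : Prop :=
  ∃ (ℓ : ℕ) (U : Fin ℓ → Matrix.unitaryGroup (Fin d) ℂ) (lam : Fin ℓ → ℝ),
    (∀ j, 0 ≤ lam j) ∧ (∀ j, lam j ≤ 1) ∧ (∑ j, lam j = 1) ∧
    Φ = ∑ j, (lam j : ℂ) • adU (U j)

/-- The Choi matrix `J(Φ) = (1/d) ∑_{i,j} E_{ij} ⊗ Φ(E_{ij})`. -/
def choi {d : ℕ} (Φ : Md d →ₗ[ℂ] Md d) : Matrix (Fin d × Fin d) (Fin d × Fin d) ℂ :=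
  (d : ℂ)⁻¹ • ∑ i : Fin d, ∑ j : Fin d,
    (Matrix.single i j (1 : ℂ)) ⊗ₖ Φ (Matrix.single i j (1 : ℂ))

/-- `⟨Φ, Ψ⟩ = tr(J(Φ)* J(Ψ))`; this is a real number whenever `Φ, Ψ` are
Hermitian-preserving, so we record its real part. -/
def pairRe {d : ℕ} (Φ Ψ : Md d →ₗ[ℂ] Md d) : ℝ := (((choi Φ)ᴴ * choi Ψ).trace).re

/-- The Hilbert–Schmidt (Choi) norm `‖Φ‖₂ = tr(J(Φ)* J(Φ))^{1/2}`. -/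
def hsNorm {d : ℕ} (Φ : Md d →ₗ[ℂ] Md d) : ℝ := Real.sqrt (pairRe Φ Φ)

attribute [local instance] Matrix.normedAddCommGroup Matrix.normedSpace

/-- The exponential `e^{tL}` of a linear map `L` on `M_d`. -/
def expL {d : ℕ} (L : Md d →ₗ[ℂ] Md d) (t : ℝ) : Md d →ₗ[ℂ] Md d :=
  ((@NormedSpace.exp _ _ _ (@NonUnitalSeminormedRing.toIsTopologicalRing _ (@ContinuousLinearMap.toNormedRing ℂ (Md d) _ _ _).toNonUnitalNormedRing.toNonUnitalSeminormedRing) ((t : ℂ) • (LinearMap.toContinuousLinearMap L)) :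
      Md d →L[ℂ] Md d)).toLinearMap

/-!
On a generalized eigenvector, `(L - μ)^m X = 0`, the semigroup acts by the finite expansion
`e^{tL} X = e^{tμ} ∑_{k<m} t^k/k! (L - μ)^k X`. A unital Kraus map `X ↦ ∑ Vⱼ* X Vⱼ` has
`∑ Vⱼ* Vⱼ = 1`, which bounds its entrywise norm by `d`, so `t ↦ e^{tL} X` is bounded on `t ≥ 0`.
For an eigenvector this forces `Re μ ≤ 0`; for `Re μ = 0` and `m = 2` the secular term
`t (L - μ) X` must vanish. For `Re μ < 0` every term `e^{tμ} t^k` decays, with no use of positivity.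
-/

open Finset
open scoped Nat

theorem nonpos_of_forall_mul_le {a C : ℝ} (h : ∀ t : ℝ, 0 ≤ t → t * a ≤ C) : a ≤ 0 := by
  by_contra! ha
  have := h ((|C| + 1) / a) (by positivity)
  rw [div_mul_cancel₀ _ ha.ne'] at this
  linarith [le_abs_self C]

theorem tendsto_cexp_mul_mul_pow_atTop_nhds_zero {μ : ℂ} (hμ : μ.re < 0) (k : ℕ) :
    Tendsto (fun t : ℝ => Complex.exp (t * μ) * (t : ℂ) ^ k) atTop (𝓝 0) := by
  rw [tendsto_zero_iff_norm_tendsto_zero]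
  refine (tendsto_rpow_mul_exp_neg_mul_atTop_nhds_zero k (-μ.re) (by linarith)).congr' ?_
  filter_upwards [eventually_ge_atTop 0] with t ht
  simp [Complex.norm_exp, Real.rpow_natCast, abs_of_nonneg ht, mul_comm]

theorem Matrix.norm_mul_mul_apply_le {l m n o α : Type*} [Fintype m] [Fintype n] [Fintype l]
    [Fintype o] [NormedRing α] (A : Matrix l m α) (X : Matrix m n α) (B : Matrix n o α) (a : l)
    (b : o) : ‖(A * X * B) a b‖ ≤ (∑ p, ‖A a p‖) * ‖X‖ * ∑ q, ‖B q b‖ := by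
  simp only [Matrix.mul_apply, sum_mul, mul_sum]
  calc ‖∑ q, ∑ p, A a p * X p q * B q b‖
      ≤ ∑ q, ∑ p, ‖A a p * X p q * B q b‖ :=
        (norm_sum_le _ _).trans (sum_le_sum fun q _ => norm_sum_le _ _)
    _ ≤ ∑ q, ∑ p, ‖A a p‖ * ‖X‖ * ‖B q b‖ := by
        gcongr with q _ p _
        refine (norm_mul₃_le ..).trans ?_
        gcongr
        exact norm_entry_le_entrywise_sup_norm X

theorem Matrix.sum_sum_norm_sq_eq_one {m ι 𝕜 : Type*} [Fintype m] [DecidableEq m] [Fintype ι]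
    [RCLike 𝕜] {V : ι → Matrix m m 𝕜} (hV : ∑ j, (V j)ᴴ * V j = 1) (a : m) :
    ∑ j, ∑ p, ‖V j p a‖ ^ 2 = 1 := by
  have := congrArg (fun M => M a a) hV
  simp only [Matrix.sum_apply, Matrix.mul_apply, Matrix.conjTranspose_apply, Matrix.one_apply_eq,
    RCLike.star_def, RCLike.conj_mul] at this
  exact_mod_cast this

theorem Matrix.norm_sum_conjTranspose_mul_mul_le {m ι 𝕜 : Type*} [Fintype m] [DecidableEq m]
    [Fintype ι] [RCLike 𝕜] {V : ι → Matrix m m 𝕜} (hV : ∑ j, (V j)ᴴ * V j = 1)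
    (X : Matrix m m 𝕜) : ‖∑ j, (V j)ᴴ * X * V j‖ ≤ Fintype.card m * ‖X‖ := by
  rw [Matrix.norm_le_iff (by positivity)]
  intro a b
  set colNorm : m → ι → ℝ := fun a j => ∑ p, ‖V j p a‖
  have hcolNorm : ∀ a j, colNorm a j ^ 2 ≤ Fintype.card m * ∑ p, ‖V j p a‖ ^ 2 :=
    fun a j => sq_sum_le_card_mul_sum_sq
  have hsum : ∑ j, colNorm a j * colNorm b j ≤ Fintype.card m := by
    calc ∑ j, colNorm a j * colNorm b j ≤ ∑ j, (colNorm a j ^ 2 + colNorm b j ^ 2) / 2 :=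
          sum_le_sum fun j _ => by nlinarith [sq_nonneg (colNorm a j - colNorm b j)]
      _ ≤ ∑ j, (Fintype.card m * ∑ p, ‖V j p a‖ ^ 2 + Fintype.card m * ∑ p, ‖V j p b‖ ^ 2) / 2 :=
          sum_le_sum fun j _ => by gcongr <;> exact hcolNorm _ j
      _ = Fintype.card m := by
          rw [← sum_div, sum_add_distrib, ← mul_sum, ← mul_sum, Matrix.sum_sum_norm_sq_eq_one hV,
            Matrix.sum_sum_norm_sq_eq_one hV]
          ring
  calc ‖(∑ j, (V j)ᴴ * X * V j) a b‖ ≤ ∑ j, ‖((V j)ᴴ * X * V j) a b‖ := by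
        rw [Matrix.sum_apply]; exact norm_sum_le _ _
    _ ≤ ∑ j, colNorm a j * ‖X‖ * colNorm b j := by
        gcongr with j
        simpa [colNorm] using Matrix.norm_mul_mul_apply_le (V j)ᴴ X (V j) a b
    _ = (∑ j, colNorm a j * colNorm b j) * ‖X‖ := by rw [sum_mul]; congr! 1 with j; ring
    _ ≤ Fintype.card m * ‖X‖ := by gcongr

theorem IsCP.norm_apply_le {d : ℕ} {Φ : Md d →ₗ[ℂ] Md d} (hΦ : IsCP Φ) (hunital : IsUnital Φ)
    (X : Md d) : ‖Φ X‖ ≤ d * ‖X‖ := by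
  obtain ⟨n, V, hV⟩ := hΦ
  have hV1 : ∑ j, (V j)ᴴ * V j = 1 := by simpa using (hV 1).symm.trans hunital
  simpa [hV X] using Matrix.norm_sum_conjTranspose_mul_mul_le hV1 X

theorem exp_apply_of_pow_sub_smul_apply_eq_zero {E : Type*} [NormedAddCommGroup E]
    [NormedSpace ℂ E] [CompleteSpace E] (A : E →L[ℂ] E) (μ : ℂ) {m : ℕ} {x : E}
    (hx : ((A - μ • 1) ^ m) x = 0) :
    NormedSpace.exp A x = Complex.exp μ • ∑ k ∈ range m, (k ! : ℂ)⁻¹ • ((A - μ • 1) ^ k) x := by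
  -- `exp_add_of_commute` needs a normed `ℚ`-algebra; `E →L[ℂ] E` has no such instance
  let _ := NormedAlgebra.restrictScalars ℚ ℂ (E →L[ℂ] E)
  set N := A - μ • 1
  have hN : NormedSpace.exp N x = ∑ k ∈ range m, (k ! : ℂ)⁻¹ • (N ^ k) x := by
    rw [NormedSpace.exp_eq_tsum ℂ, ← ContinuousLinearMap.apply_apply (v := x),
      ContinuousLinearMap.map_tsum _ (NormedSpace.expSeries_summable' (𝕂 := ℂ) N)]
    refine tsum_eq_sum fun k hk => ?_
    obtain ⟨j, rfl⟩ := Nat.exists_eq_add_of_le (not_lt.mp (mem_range.not.mp hk))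
    rw [ContinuousLinearMap.apply_apply, _root_.smul_apply, add_comm, pow_add,
      mul_apply_eq_comp, hx, map_zero, smul_zero]
  have hA : A = algebraMap ℂ (E →L[ℂ] E) μ + N := by
    rw [Algebra.algebraMap_eq_smul_one, add_sub_cancel]
  rw [hA, NormedSpace.exp_add_of_commute (Algebra.commutes μ N), ← NormedSpace.algebraMap_exp_comm,
    mul_apply_eq_comp, hN, Complex.exp_eq_exp_ℂ]
  rfl

theorem exp_smul_toContinuousLinearMap_apply_of_pow_sub_smul_apply_eq_zero {E : Type*}
    [NormedAddCommGroup E] [NormedSpace ℂ E] [FiniteDimensional ℂ E] (L : Module.End ℂ E) (μ : ℂ)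
    {m : ℕ} {x : E} (hx : ((L - μ • 1) ^ m) x = 0) (t : ℂ) :
    NormedSpace.exp (t • LinearMap.toContinuousLinearMap L) x
      = Complex.exp (t * μ) • ∑ k ∈ range m, (t ^ k / k !) • ((L - μ • 1) ^ k) x := by
  have hpow : ∀ k, ((t • LinearMap.toContinuousLinearMap L - (t * μ) • 1) ^ k) x
      = t ^ k • ((L - μ • 1) ^ k) x := by
    intro k
    have hcoe : t • LinearMap.toContinuousLinearMap L - (t * μ) • 1
        = Module.End.toContinuousLinearMap E (t • (L - μ • 1)) := by
      ext1 y
      simp [smul_sub, smul_smul]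
      rfl
    rw [hcoe, ← map_pow, smul_pow]
    rfl
  have := FiniteDimensional.complete ℂ E
  refine (exp_apply_of_pow_sub_smul_apply_eq_zero _ _ (by rw [hpow, hx, smul_zero])).trans ?_
  simp_rw [hpow, smul_smul, div_eq_inv_mul]

theorem expL_apply_of_pow_sub_smul_apply_eq_zero {d : ℕ} (L : Md d →ₗ[ℂ] Md d) (μ : ℂ) {m : ℕ}
    {X : Md d} (hX : ((L - μ • 1) ^ m) X = 0) (t : ℝ) :
    expL L t X = Complex.exp (t * μ) • ∑ k ∈ range m, ((t : ℂ) ^ k / k !) • ((L - μ • 1) ^ k) X :=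
  exp_smul_toContinuousLinearMap_apply_of_pow_sub_smul_apply_eq_zero L μ hX t

section BoundedSemigroup

variable {d : ℕ} {L : Md d →ₗ[ℂ] Md d} {C : ℝ}

theorem re_nonpos_of_apply_eq_smul (hbound : ∀ t : ℝ, 0 ≤ t → ∀ Y, ‖expL L t Y‖ ≤ C * ‖Y‖)
    {μ : ℂ} {X : Md d} (hX : X ≠ 0) (hLX : L X = μ • X) : μ.re ≤ 0 := by
  have hexp : ∀ t : ℝ, expL L t X = Complex.exp (t * μ) • X := fun t => by
    simpa using expL_apply_of_pow_sub_smul_apply_eq_zero L μ (m := 1) (by simp [hLX]) t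
  refine nonpos_of_forall_mul_le (C := C - 1) fun t ht => ?_
  have := hbound t ht X
  rw [hexp, norm_smul, Complex.norm_exp] at this
  have := le_of_mul_le_mul_right this (norm_pos_iff.mpr hX)
  simp only [Complex.re_ofReal_mul] at this
  linarith [Real.add_one_le_exp (t * μ.re)]

theorem ker_sq_eq_ker_of_re_eq_zero (hbound : ∀ t : ℝ, 0 ≤ t → ∀ Y, ‖expL L t Y‖ ≤ C * ‖Y‖)
    {μ : ℂ} (hμ : μ.re = 0) :
    LinearMap.ker ((L - μ • 1) ^ 2) = LinearMap.ker (L - μ • 1) := by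
  refine le_antisymm (fun X hX => ?_) fun X hX => by simp_all [pow_two]
  rw [LinearMap.mem_ker] at hX ⊢
  set Y := (L - μ • 1) X
  have hexp : ∀ t : ℝ, expL L t X = Complex.exp (t * μ) • (X + (t : ℂ) • Y) := fun t => by
    rw [expL_apply_of_pow_sub_smul_apply_eq_zero L μ hX t]
    simp only [sum_range_succ, sum_range_zero, zero_add, pow_zero, pow_one, Nat.factorial_zero,
      Nat.factorial_one, Nat.cast_one, div_one, one_smul, Module.End.one_apply, Y]
  refine norm_le_zero_iff.mp (nonpos_of_forall_mul_le (C := C * ‖X‖ + ‖X‖) fun t ht => ?_)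
  have := hbound t ht X
  rw [hexp, norm_smul, Complex.norm_exp, Complex.re_ofReal_mul, hμ, mul_zero, Real.exp_zero,
    one_mul] at this
  have := norm_le_add_norm_add ((t : ℂ) • Y) X
  rw [norm_smul, Complex.norm_real, Real.norm_of_nonneg ht, add_comm _ X] at this
  linarith

end BoundedSemigroup

theorem tendsto_expL_apply_atTop_nhds_zero {d : ℕ} {L : Md d →ₗ[ℂ] Md d} {μ : ℂ} (hμ : μ.re < 0)
    {m : ℕ} {X : Md d} (hX : ((L - μ • 1) ^ m) X = 0) :
    Tendsto (fun t => expL L t X) atTop (𝓝 0) := by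
  simp_rw [expL_apply_of_pow_sub_smul_apply_eq_zero L μ hX, smul_sum, smul_smul, ← mul_div_assoc]
  simpa using tendsto_finsetSum (range m) fun k _ =>
    ((tendsto_cexp_mul_mul_pow_atTop_nhds_zero hμ k).div_const (k ! : ℂ)).smul_const
      (((L - μ • 1) ^ k) X)

/-- spectral properties of the generator of a semigroup of unital CP maps:
eigenvalues have nonpositive real part; purely imaginary eigenvalues are semisimple;
generalized eigenvectors for eigenvalues with negative real part decay under `e^{tL}`. -/
theorem stmt_6 (d : ℕ) (L : Md d →ₗ[ℂ] Md d)
    (h : ∀ t : ℝ, 0 ≤ t → IsCP (expL L t) ∧ IsUnital (expL L t)) :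
    (∀ lam : ℂ, (∃ X : Md d, X ≠ 0 ∧ L X = lam • X) → lam.re ≤ 0) ∧
    (∀ lam : ℂ, (∃ X : Md d, X ≠ 0 ∧ L X = lam • X) → lam.re = 0 →
      LinearMap.ker ((L - lam • (1 : Module.End ℂ (Md d))) ^ 2) =
        LinearMap.ker (L - lam • (1 : Module.End ℂ (Md d)))) ∧
    (∀ lam : ℂ, (∃ X : Md d, X ≠ 0 ∧ L X = lam • X) → lam.re < 0 →
      ∀ X ∈ LinearMap.ker ((L - lam • (1 : Module.End ℂ (Md d))) ^ (d ^ 2)),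
        Filter.Tendsto (fun t : ℝ => expL L t X) atTop (nhds 0)) := by
  have hbound : ∀ t : ℝ, 0 ≤ t → ∀ Y, ‖expL L t Y‖ ≤ d * ‖Y‖ :=
    fun t ht => (h t ht).1.norm_apply_le (h t ht).2
  refine ⟨fun μ ⟨X, hX, hLX⟩ => re_nonpos_of_apply_eq_smul hbound hX hLX,
    fun μ _ hμ => ker_sq_eq_ker_of_re_eq_zero hbound hμ,
    fun μ _ hμ X hX => tendsto_expL_apply_atTop_nhds_zero hμ hX⟩
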